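/- arXiv:1510.03660 — 2 statements merged into one kernel-verified Lean document; each statement's English description precedes it below -/
import Mathlib

section
/- Let N ≥ 3 be an integer, a ∈ ℝ with a > −((N−2)/2)², and α = (N−2)/2 − √(((N−2)/2)² + a). Define v : (ℝ^N ∖ {0}) × (0,∞) → ℝ by v(x,t) = t^(−N/2+α) · |x|^(−α) · e^(−|x|²/(4t)). Then v is a self-similar solution of the heat equation with inverse-square potential: for every x ∈ ℝ^N with x ≠ 0 and every t > 0, ∂_t v(x,t) = Δ_x v(x,t) − a v(x,t)/|x|². -/
open MeasureTheory Real

/-- `α = (N−2)/2 − √(((N−2)/2)² + a)`. -/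
noncomputable def alphaPar (N : ℕ) (a : ℝ) : ℝ :=
  ((N : ℝ) - 2) / 2 - Real.sqrt ((((N : ℝ) - 2) / 2) ^ 2 + a)

/-- The Laplacian: the sum of the second partial derivatives in the coordinate
directions. -/
noncomputable def laplacian {N : ℕ} {F : Type*} [NormedAddCommGroup F] [NormedSpace ℝ F]
    (f : EuclideanSpace ℝ (Fin N) → F) (x : EuclideanSpace ℝ (Fin N)) : F :=
  ∑ i : Fin N,
    fderiv ℝ (fun y => fderiv ℝ f y (EuclideanSpace.single i (1 : ℝ))) x
      (EuclideanSpace.single i (1 : ℝ))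

/-!
Write `v(·, t) = g(|x|²)` with `g(r) = t^q r^(-α/2) e^(-r/(4t))`, `q = -N/2 + α`. For such a
radial function `Δ g(|x|²) = 2N g'(|x|²) + 4|x|² g''(|x|²)`, and `g' = g h` with
`h(r) = -α/(2r) - 1/(4t)`. Hence `∂ₜv` and `Δv - a v/|x|²` are both `v` times explicit rational
functions of `|x|²` and `t`; the terms in `t` match because of the choice of `q`, and those in
`1/|x|²` because `α` is a root of the indicial equation `α² - (N-2)α = a`.
-/

open scoped RealInnerProductSpace

lemma alphaPar_sq_sub_mul (N : ℕ) {a : ℝ} (ha : -((((N : ℝ) - 2) / 2) ^ 2) ≤ a) :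
    alphaPar N a ^ 2 - ((N : ℝ) - 2) * alphaPar N a = a := by
  have h := Real.sq_sqrt (show 0 ≤ (((N : ℝ) - 2) / 2) ^ 2 + a by linarith)
  unfold alphaPar
  linear_combination h

lemma Real.rpow_eq_sq_rpow_div_two {x : ℝ} (hx : 0 ≤ x) (β : ℝ) :
    x ^ β = (x ^ 2) ^ (β / 2) := by
  rw [← Real.rpow_natCast_mul hx]
  congr 1
  push_cast
  ring

lemma HasDerivAt.rpow_mul_exp {φ : ℝ → ℝ} {φ' r : ℝ} (hφ : HasDerivAt φ φ' r) (hr : r ≠ 0)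
    (p : ℝ) :
    HasDerivAt (fun r => r ^ p * Real.exp (φ r)) (r ^ p * Real.exp (φ r) * (p / r + φ')) r := by
  refine ((Real.hasDerivAt_rpow_const (p := p) (Or.inl hr)).fun_mul hφ.exp).congr_deriv ?_
  rw [Real.rpow_sub_one hr]
  ring

section Radial

variable {E : Type*} [NormedAddCommGroup E] [InnerProductSpace ℝ E] {g g' : ℝ → ℝ} {g'' : ℝ}

lemma hasFDerivAt_comp_norm_sq {x : E} {d : ℝ} (hg : HasDerivAt g d (‖x‖ ^ 2)) :
    HasFDerivAt (fun y => g (‖y‖ ^ 2)) (d • (2 • innerSL ℝ x)) x :=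
  hg.comp_hasFDerivAt x (hasStrictFDerivAt_norm_sq x).hasFDerivAt

lemma fderiv_fderiv_comp_norm_sq_apply (x w : E)
    (hg : ∀ᶠ r in nhds (‖x‖ ^ 2), HasDerivAt g (g' r) r) (hg' : HasDerivAt g' g'' (‖x‖ ^ 2)) :
    fderiv ℝ (fun y => fderiv ℝ (fun z => g (‖z‖ ^ 2)) y w) x w
      = 2 * ‖w‖ ^ 2 * g' (‖x‖ ^ 2) + 4 * ⟪x, w⟫ ^ 2 * g'' := by
  have hnear : (fun y => fderiv ℝ (fun z => g (‖z‖ ^ 2)) y w)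
      =ᶠ[nhds x] fun y => g' (‖y‖ ^ 2) * (2 * ⟪y, w⟫) := by
    have hcont : Filter.Tendsto (fun y : E => ‖y‖ ^ 2) (nhds x) (nhds (‖x‖ ^ 2)) :=
      (continuous_norm.pow 2).continuousAt
    filter_upwards [hcont.eventually hg] with y hy
    simp [(hasFDerivAt_comp_norm_sq hy).fderiv]
  have hw : HasFDerivAt (fun y : E => ⟪y, w⟫) (innerSL ℝ w) x := by
    simpa [real_inner_comm] using (innerSL ℝ w).hasFDerivAt
  rw [hnear.fderiv_eq, ((hasFDerivAt_comp_norm_sq hg').fun_mul (hw.const_mul 2)).fderiv]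
  simp
  ring

lemma laplacian_comp_norm_sq {N : ℕ} (x : EuclideanSpace ℝ (Fin N))
    (hg : ∀ᶠ r in nhds (‖x‖ ^ 2), HasDerivAt g (g' r) r) (hg' : HasDerivAt g' g'' (‖x‖ ^ 2)) :
    laplacian (fun y => g (‖y‖ ^ 2)) x = 2 * N * g' (‖x‖ ^ 2) + 4 * ‖x‖ ^ 2 * g'' := by
  simp only [laplacian, fderiv_fderiv_comp_norm_sq_apply x _ hg hg', Finset.sum_add_distrib,
    EuclideanSpace.inner_single_right]
  simp
  rw [← Finset.sum_mul, ← Finset.mul_sum, ← EuclideanSpace.real_norm_sq_eq]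
  ring

end Radial

theorem selfsimilar_heat_solution_general
    (N : ℕ) (a : ℝ) (ha : a > -((((N : ℝ) - 2) / 2) ^ 2))
    (v : EuclideanSpace ℝ (Fin N) → ℝ → ℝ)
    (hv : ∀ (x : EuclideanSpace ℝ (Fin N)) (t : ℝ), v x t =
      t ^ (-(N : ℝ) / 2 + alphaPar N a) * ‖x‖ ^ (-(alphaPar N a)) *
        Real.exp (-‖x‖ ^ 2 / (4 * t))) :
    ∀ (x : EuclideanSpace ℝ (Fin N)), x ≠ 0 → ∀ t : ℝ, 0 < t →
      deriv (fun τ => v x τ) t =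
        laplacian (fun y => v y t) x - a * v x t / ‖x‖ ^ 2 := by
  intro x hx t ht
  set α := alphaPar N a
  set q := -(N : ℝ) / 2 + α
  set s := ‖x‖ ^ 2 with hs_def
  have hs : s ≠ 0 := pow_ne_zero 2 (norm_ne_zero_iff.2 hx)
  set g : ℝ → ℝ := fun r => t ^ q * (r ^ (-α / 2) * exp (-r / (4 * t)))
  set h : ℝ → ℝ := fun r => -α / 2 * r⁻¹ - 1 / (4 * t)
  have hg (r : ℝ) (hr : r ≠ 0) : HasDerivAt g (g r * h r) r :=
    ((((hasDerivAt_neg r).div_const (4 * t)).rpow_mul_exp hr (-α / 2)).const_mul _).congr_deriv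
      (by ring)
  have hh : HasDerivAt h (-α / 2 * -(s ^ 2)⁻¹) s :=
    ((hasDerivAt_inv hs).const_mul (-α / 2)).sub_const _
  have hvg : (fun y => v y t) = fun y => g (‖y‖ ^ 2) :=
    funext fun y => by rw [hv, Real.rpow_eq_sq_rpow_div_two (norm_nonneg y), mul_assoc]
  have hlap := laplacian_comp_norm_sq x ((eventually_ne_nhds hs).mono hg) ((hg s hs).mul hh)
  rw [← hvg, ← hs_def] at hlap
  have htime : HasDerivAt (fun τ => v x τ) (v x t * (q / t + s / (4 * t ^ 2))) t := by
    have hφ : HasDerivAt (fun τ => -s / (4 * τ)) (s / (4 * t ^ 2)) t :=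
      ((hasDerivAt_const t (-s)).div ((hasDerivAt_id' t).const_mul 4) (by positivity)).congr_deriv
        (by field_simp; ring)
    have hvx : (fun τ => v x τ) = fun τ => τ ^ q * exp (-s / (4 * τ)) * ‖x‖ ^ (-α) :=
      funext fun τ => by rw [hv]; ring
    rw [hvx]
    exact ((hφ.rpow_mul_exp ht.ne' q).mul_const _).congr_deriv (by rw [hv]; ring)
  have hprofile : q / t + s / (4 * t ^ 2)
      = 2 * N * h s + 4 * s * (h s * h s + -α / 2 * -(s ^ 2)⁻¹) - a / s := by
    simp only [h, q]
    field_simp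
    linear_combination -16 * t ^ 2 * alphaPar_sq_sub_mul N ha.le
  rw [htime.deriv, hlap, congrFun hvg x, hprofile]
  ring

theorem selfsimilar_heat_solution
    (N : ℕ) (hN : 3 ≤ N) (a : ℝ) (ha : a > -((((N : ℝ) - 2) / 2) ^ 2))
    (v : EuclideanSpace ℝ (Fin N) → ℝ → ℝ)
    (hv : ∀ (x : EuclideanSpace ℝ (Fin N)) (t : ℝ), v x t =
      t ^ (-(N : ℝ) / 2 + alphaPar N a) * ‖x‖ ^ (-(alphaPar N a)) *
        Real.exp (-‖x‖ ^ 2 / (4 * t))) :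
    ∀ (x : EuclideanSpace ℝ (Fin N)), x ≠ 0 → ∀ t : ℝ, 0 < t →
      deriv (fun τ => v x τ) t =
        laplacian (fun y => v y t) x - a * v x t / ‖x‖ ^ 2 :=
  selfsimilar_heat_solution_general N a ha v hv
end

section
/- Let N ≥ 3 be an integer, a ∈ ℝ with −((N−2)/2)² < a < 0, and α = (N−2)/2 − √(((N−2)/2)² + a), so that α > 0. Let v(x,t) = t^(−N/2+α) · |x|^(−α) · e^(−|x|²/(4t)) for x ≠ 0 and t > 0. Then: (i) for every t₀ > 0 the function x ↦ v(x,t₀) is integrable on ℝ^N; (ii) for every t > 0 the function x ↦ v(x,t) is not essentially bounded on ℝ^N (its essential supremum with respect to Lebesgue measure is +∞). In particular this solution of the heat equation with potential a/|x|² has L¹ initial datum at any positive time but never lies in L^∞, so the classical L¹→L^∞ heat decay fails when a < 0. -/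
open MeasureTheory Real

/-!
Since `a < 0` we have `0 < α`, while always `α < N`. In polar coordinates the integral of
`|x|^(-α) e^(-|x|²/4t)` becomes `∫₀^∞ r^(N-1-α) e^(-r²/4t) dr`, finite because
`N - 1 - α > -1`. On the other hand `|x|^(-α) → ∞` as `x → 0`, so every level set
`{v(·,t) > M}` contains a punctured ball, which has positive Lebesgue measure.
-/

open Filter Topology Set

lemma alphaPar_pos {N : ℕ} (hN : 3 ≤ N) {a : ℝ} (ha : a < 0) : 0 < alphaPar N a := by
  have hc : 0 < ((N : ℝ) - 2) / 2 := by
    have : (3 : ℝ) ≤ N := by exact_mod_cast hN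
    linarith
  have := (Real.sqrt_lt' hc).2
    (show (((N : ℝ) - 2) / 2) ^ 2 + a < (((N : ℝ) - 2) / 2) ^ 2 by linarith)
  unfold alphaPar
  linarith

lemma alphaPar_lt (N : ℕ) (a : ℝ) : alphaPar N a < N := by
  have := Real.sqrt_nonneg ((((N : ℝ) - 2) / 2) ^ 2 + a)
  have : (0 : ℝ) ≤ N := N.cast_nonneg
  unfold alphaPar
  linarith

section

variable {E : Type*} [NormedAddCommGroup E]

theorem integrable_norm_rpow_mul_exp_neg_mul_sq [NormedSpace ℝ E] [MeasurableSpace E]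
    [BorelSpace E] [FiniteDimensional ℝ E] [Nontrivial E] (μ : Measure E) [μ.IsAddHaarMeasure]
    {b : ℝ} (hb : 0 < b) {s : ℝ} (hs : -(Module.finrank ℝ E : ℝ) < s) :
    Integrable (fun x : E => ‖x‖ ^ s * exp (-b * ‖x‖ ^ 2)) μ := by
  have hd : 1 ≤ Module.finrank ℝ E := Module.finrank_pos
  rw [integrable_fun_norm_addHaar μ (f := fun r => r ^ s * exp (-b * r ^ 2))]
  refine (integrableOn_rpow_mul_exp_neg_mul_sq hb (s := (Module.finrank ℝ E - 1 : ℕ) + s)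
    (by push_cast [hd]; linarith)).congr_fun (fun r (hr : 0 < r) => ?_) measurableSet_Ioi
  dsimp only
  rw [smul_eq_mul, rpow_add hr, rpow_natCast, mul_assoc]

theorem tendsto_norm_rpow_mul_exp_neg_mul_sq_nhdsNE_zero {s : ℝ} (hs : s < 0) (b : ℝ) :
    Tendsto (fun x : E => ‖x‖ ^ s * exp (-b * ‖x‖ ^ 2)) (𝓝[≠] 0) atTop := by
  have hexp : Tendsto (fun x : E => exp (-b * ‖x‖ ^ 2)) (𝓝[≠] 0) (𝓝 1) := by
    have : Continuous (fun x : E => exp (-b * ‖x‖ ^ 2)) := by fun_prop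
    simpa using (this.tendsto 0).mono_left nhdsWithin_le_nhds
  exact ((tendsto_rpow_neg_nhdsGT_zero hs).comp tendsto_norm_nhdsNE_zero).atTop_mul_pos one_pos hexp

end

theorem essSup_eq_top_of_tendsto_nhdsNE {X : Type*} [TopologicalSpace X] [MeasurableSpace X]
    {μ : Measure X} [μ.IsOpenPosMeasure] [NullSingletonClass μ] {f : X → ENNReal} {x : X}
    (hf : Tendsto f (𝓝[≠] x) (𝓝 ⊤)) : essSup f μ = ⊤ := by
  by_contra h
  obtain ⟨U, hU, hxU, hUf⟩ := mem_nhdsWithin.1 (hf (Ioi_mem_nhds (lt_top_iff_ne_top.2 h)))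
  have hnull : μ {y | essSup f μ < f y} = 0 := by
    simpa only [not_le] using ae_iff.1 (ENNReal.ae_le_essSup f)
  have := measure_mono_null hUf hnull
  rw [← sdiff_eq, measure_sdiff_null (measure_singleton x)] at this
  exact (hU.measure_pos μ ⟨x, hxU⟩).ne' this

theorem no_Linfty_bound_for_heat_general
    (N : ℕ) (hN : 3 ≤ N) (a : ℝ) (ha' : a < 0)
    (v : EuclideanSpace ℝ (Fin N) → ℝ → ℝ)
    (hv : ∀ (x : EuclideanSpace ℝ (Fin N)) (t : ℝ), v x t =
      t ^ (-(N : ℝ) / 2 + alphaPar N a) * ‖x‖ ^ (-(alphaPar N a)) *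
        Real.exp (-‖x‖ ^ 2 / (4 * t))) :
    0 < alphaPar N a ∧
    (∀ t₀ : ℝ, 0 < t₀ →
      Integrable (fun x => v x t₀) (volume : Measure (EuclideanSpace ℝ (Fin N)))) ∧
    ∀ t : ℝ, 0 < t →
      essSup (fun x => (‖v x t‖₊ : ENNReal))
        (volume : Measure (EuclideanSpace ℝ (Fin N))) = ⊤ := by
  have : Nonempty (Fin N) := ⟨⟨0, by omega⟩⟩
  have hα := alphaPar_pos hN ha'
  have hv_gauss (x : EuclideanSpace ℝ (Fin N)) (t : ℝ) :
      v x t = t ^ (-(N : ℝ) / 2 + alphaPar N a) *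
        (‖x‖ ^ (-alphaPar N a) * exp (-(4 * t)⁻¹ * ‖x‖ ^ 2)) := by
    rw [hv, mul_assoc]; congr 3; ring
  refine ⟨hα, fun t ht => ?_, fun t ht => ?_⟩
  · simp only [hv_gauss]
    refine (integrable_norm_rpow_mul_exp_neg_mul_sq volume (by positivity) ?_).const_mul _
    simpa using alphaPar_lt N a
  · refine essSup_eq_top_of_tendsto_nhdsNE (x := 0) ?_
    have hblowup := (tendsto_norm_rpow_mul_exp_neg_mul_sq_nhdsNE_zero
      (E := EuclideanSpace ℝ (Fin N)) (neg_neg_of_pos hα) (4 * t)⁻¹).const_mul_atTop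
      (rpow_pos_of_pos ht (-(N : ℝ) / 2 + alphaPar N a))
    simpa only [hv_gauss, Function.comp_def, ofReal_norm, enorm_eq_nnnorm] using
      ENNReal.tendsto_ofReal_atTop.comp (tendsto_norm_atTop_atTop.comp hblowup)

theorem no_Linfty_bound_for_heat
    (N : ℕ) (hN : 3 ≤ N) (a : ℝ) (ha : -((((N : ℝ) - 2) / 2) ^ 2) < a) (ha' : a < 0)
    (v : EuclideanSpace ℝ (Fin N) → ℝ → ℝ)
    (hv : ∀ (x : EuclideanSpace ℝ (Fin N)) (t : ℝ), v x t =
      t ^ (-(N : ℝ) / 2 + alphaPar N a) * ‖x‖ ^ (-(alphaPar N a)) *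
        Real.exp (-‖x‖ ^ 2 / (4 * t))) :
    0 < alphaPar N a ∧
    (∀ t₀ : ℝ, 0 < t₀ →
      Integrable (fun x => v x t₀) (volume : Measure (EuclideanSpace ℝ (Fin N)))) ∧
    ∀ t : ℝ, 0 < t →
      essSup (fun x => (‖v x t‖₊ : ENNReal))
        (volume : Measure (EuclideanSpace ℝ (Fin N))) = ⊤ :=
  no_Linfty_bound_for_heat_general N hN a ha' v hv
end
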